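/- Let G be a finite group, A an abelian normal p-subgroup of G, and T a subgroup of G containing A with T/A a p-group. Suppose L ≤ G acts trivially (by conjugation) on both A and T/A, i.e., L centralizes A and L normalizes T with [L, T] ≤ A. Then L/C_L(T) is a p-group. -/
import Mathlib


/-- Coprime-action stability: if `A` is an abelian normal `p`-subgroup of the finite
group `G`, `T ≥ A` with `T/A` a `p`-group, and `L` centralizes `A` and satisfies
`[L, T] ≤ A`, then `L/C_L(T)` is a `p`-group, i.e. the index of `C_L(T)` in `L`
is a power of `p`. -/
theorem stability_pGroup (p : ℕ) (hp : p.Prime) (G : Type*) [Group G] [Finite G]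
    (A T L : Subgroup G) (hAnormal : A.Normal) (hAab : ∀ a b : A, a * b = b * a)
    (hAp : IsPGroup p A) (hAT : A ≤ T)
    (hTA : IsPGroup p (T ⧸ A.subgroupOf T))
    (hLA : (L : Set G) ⊆ Subgroup.centralizer (A : Set G))
    (hLT : ∀ l ∈ L, ∀ t ∈ T, l * t * l⁻¹ * t⁻¹ ∈ A) :
    ∃ n : ℕ, ((Subgroup.centralizer (T : Set G)).subgroupOf L).index = p ^ n := by
  haveI := Fact.mk hp
  obtain ⟨k, hk⟩ := (IsPGroup.iff_card (p := p) (G := A)).mp hAp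
  -- key: for l ∈ L, l ^ p ^ k centralizes T
  have key : ∀ l ∈ L, (l : G) ^ p ^ k ∈ Subgroup.centralizer (T : Set G) := by
    intro l hl
    rw [Subgroup.mem_centralizer_iff]
    intro t ht
    set c : G := l * t * l⁻¹ * t⁻¹ with hc
    have hcA : c ∈ A := hLT l hl t ht
    have conj : ∀ m : ℕ, l ^ m * t * (l ^ m)⁻¹ = c ^ m * t := by
      intro m
      induction m with
      | zero => simp
      | succ m ih =>
        have hcm : c ^ m ∈ A := A.pow_mem hcA m
        have hcomm : l * c ^ m = c ^ m * l :=
          (hLA hl (c ^ m) hcm).symm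
        have : l ^ (m + 1) * t * (l ^ (m + 1))⁻¹
            = l * (l ^ m * t * (l ^ m)⁻¹) * l⁻¹ := by
          rw [pow_succ']
          group
        rw [this, ih]
        calc l * (c ^ m * t) * l⁻¹ = (l * c ^ m) * (t * l⁻¹) := by group
          _ = (c ^ m * l) * (t * l⁻¹) := by rw [hcomm]
          _ = c ^ m * (l * t * l⁻¹ * t⁻¹) * t := by group
          _ = c ^ m * c * t := rfl
          _ = c ^ (m + 1) * t := by rw [pow_succ]
    have hcpow : c ^ p ^ k = 1 := by
      have := pow_card_eq_one' (x := (⟨c, hcA⟩ : A))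
      rw [hk] at this
      have := congrArg (Subtype.val) this
      simpa using this
    have := conj (p ^ k)
    rw [hcpow, one_mul] at this
    calc t * l ^ p ^ k = l ^ p ^ k * (l ^ p ^ k)⁻¹ * t * l ^ p ^ k := by group
      _ = l ^ p ^ k * ((l ^ p ^ k)⁻¹ * t * l ^ p ^ k) := by group
      _ = l ^ p ^ k * t := by
          congr 1
          have h2 := congrArg (fun x => (l ^ p ^ k)⁻¹ * x * l ^ p ^ k) this
          rw [← h2]; group
  have hnormT : ∀ l ∈ L, ∀ t ∈ T, l * t * l⁻¹ ∈ T := by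
    intro l hl t ht
    have h1 : l * t * l⁻¹ * t⁻¹ ∈ A := hLT l hl t ht
    have := T.mul_mem (hAT h1) ht
    simpa [mul_assoc] using this
  set H := (Subgroup.centralizer (T : Set G)).subgroupOf L with hH
  haveI : H.Normal := by
    constructor
    intro h hh l
    rw [hH, Subgroup.mem_subgroupOf] at hh ⊢
    rw [Subgroup.mem_centralizer_iff] at hh ⊢
    intro t ht
    have h2 : ((l : G))⁻¹ * t * l ∈ T := by
      have := hnormT (l : G)⁻¹ (L.inv_mem l.2) t ht
      simpa using this
    have h3 := hh _ h2
    have hcoe : ((l * h * l⁻¹ : L) : G) = (l : G) * (h : G) * (l : G)⁻¹ := by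
      push_cast; ring_nf
    rw [hcoe]
    set a : G := (l : G)
    set b : G := (h : G)
    calc t * (a * b * a⁻¹) = a * ((a⁻¹ * t * a) * b) * a⁻¹ := by group
      _ = a * (b * (a⁻¹ * t * a)) * a⁻¹ := by rw [h3]
      _ = a * b * a⁻¹ * t := by group
  have hQ : IsPGroup p (L ⧸ H) := by
    intro x
    obtain ⟨l, rfl⟩ := QuotientGroup.mk_surjective x
    refine ⟨k, ?_⟩
    rw [← QuotientGroup.mk_pow, QuotientGroup.eq_one_iff]
    rw [hH, Subgroup.mem_subgroupOf]
    exact_mod_cast key (l : G) l.2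
  obtain ⟨n, hn⟩ := (IsPGroup.iff_card (p := p)).mp hQ
  exact ⟨n, hn⟩
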